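/- Fix 1 ≤ p < 2 and set α = 2 − p, and let u satisfy Hypothesis B on an open set X ⊆ ℝⁿ. For a set K let ‖u‖_α(K) = sup_{x ≠ y ∈ K} |u(x) − u(y)|/|x−y|^α denote the α-Hölder seminorm, and for x₀ ∈ X let ‖u‖_α(x₀) = lim_{ρ↓0} ‖u‖_α(B_ρ(x₀)) (the infinitesimal Hölder norm; the limit exists since ‖u‖_α(B_ρ(x₀)) is nondecreasing in ρ), where B_ρ(x₀) is the closed ball of radius ρ about x₀. Then for every 0 < R < dist(x₀, ∂X): ‖u‖_α(x₀) ≤ (M(u, x₀, R) − u(x₀))/R^α ≤ ‖u‖_α(B_R(x₀)); and consequently ‖u‖_α(x₀) = Θ^M(u, x₀), where Θ^M(u, x₀) = lim_{t↓0} (M(u, x₀, t) − u(x₀))/t^α. -/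

import Mathlib

open Set Filter Topology

noncomputable section

abbrev EucSp (n : ℕ) := EuclideanSpace ℝ (Fin n)

/-- The ball maximum `M(u, y, t) = sup_{|x − y| ≤ t} u(x)` (so `M(u, y, 0) = u(y)`). -/
def ballSup {n : ℕ} (u : EucSp n → EReal) (y : EucSp n) (t : ℝ) : EReal :=
  sSup (u '' Metric.closedBall y t)

/-- Hypothesis B (for `1 ≤ p < 2`, `α = 2 − p`): `X` is open, `u` is upper
semicontinuous with values in `[−∞, ∞)`, not identically `−∞` on any ball contained
in `X`, the maximum principle holds, and `K_p` double monotonicity holds: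
`(M(u,y,t) − M(u,y,s))/(t^α − s^α)` is nondecreasing in `s` and `t` (stated in
cross-multiplied form in `EReal`). -/
def HypB {n : ℕ} (p : ℝ) (X : Set (EucSp n)) (u : EucSp n → EReal) : Prop :=
  IsOpen X ∧ UpperSemicontinuousOn u X ∧ (∀ x ∈ X, u x < ⊤) ∧
  (∀ y : EucSp n, ∀ r : ℝ, 0 < r → Metric.closedBall y r ⊆ X →
    ∃ x ∈ Metric.closedBall y r, u x ≠ ⊥) ∧
  (∀ y : EucSp n, ∀ t : ℝ, 0 < t → Metric.closedBall y t ⊆ X →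
    ballSup u y t = sSup (u '' Metric.sphere y t)) ∧
  (∀ y ∈ X, ∀ s t s' t' : ℝ, 0 ≤ s → s < t → s ≤ s' → t ≤ t' → s' < t' →
    Metric.closedBall y t' ⊆ X →
    (ballSup u y t - ballSup u y s) * (((t' ^ (2 - p) - s' ^ (2 - p) : ℝ)) : EReal) ≤
      (ballSup u y t' - ballSup u y s') * (((t ^ (2 - p) - s ^ (2 - p) : ℝ)) : EReal))

/-- The `α`-Hölder seminorm of `u` on a set `K`. -/
def holderSemi {n : ℕ} (α : ℝ) (u : EucSp n → EReal) (K : Set (EucSp n)) : ℝ :=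
  sSup {c : ℝ | ∃ x ∈ K, ∃ y ∈ K, x ≠ y ∧
    c = |(u x).toReal - (u y).toReal| / dist x y ^ α}

/-!
With `s = 0`, double monotonicity bounds an increment `u x - u y` by `|x - y|^α` times an
increment of `M(u, y, ·)`. Recentring at `x₀`, for `x, y ∈ B_ρ(x₀)` and `3ρ < R`,
`|u x - u y| ((R - ρ)^α - (2ρ)^α) ≤ (M(u, x₀, R) - u x₀) |x - y|^α`,
so `lim_{ρ↓0} ‖u‖_α(B_ρ(x₀)) ≤ (M(u, x₀, R) - u x₀) / R^α`. Conversely `M(u, x₀, R)` is attained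
by upper semicontinuity, so this quotient is at most `‖u‖_α(B_R(x₀))`, and letting `R ↓ 0`
squeezes the quotients to the same limit.

`holderSemi` is a real `sSup`, hence `0` on unbounded sets, so the argument needs
`‖u‖_α(B_R(x₀)) < ∞`; this follows from the same increment estimate once `u` is bounded below
on the ball.
-/

open Metric

theorem IsCompact.bddBelow_image_of_forall_nhdsWithin {E : Type*} [TopologicalSpace E]
    {K : Set E} (hK : IsCompact K) {f : E → ℝ}
    (hf : ∀ x ∈ K, ∃ t ∈ 𝓝[K] x, BddBelow (f '' t)) : BddBelow (f '' K) := by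
  refine hK.induction_on (p := fun s => BddBelow (f '' s)) (by simp) ?_ ?_ hf
  · exact fun s t hst ht => ht.mono (image_mono hst)
  · intro s t hs ht
    rw [image_union]
    exact hs.union ht

theorem exists_pos_closedBall_add_subset {E : Type*} [NormedAddCommGroup E] [NormedSpace ℝ E]
    [ProperSpace E] {X : Set E} (hX : IsOpen X) {x : E} {R : ℝ} (hR : 0 ≤ R)
    (hsub : closedBall x R ⊆ X) : ∃ ε > 0, closedBall x (R + ε) ⊆ X := by
  obtain ⟨ε, hε, h⟩ := (isCompact_closedBall x R).exists_cthickening_subset_open hX hsub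
  exact ⟨ε, hε, by rwa [cthickening_closedBall hε.le hR, add_comm] at h⟩

theorem tendsto_div_rpow_sub_rpow (D : ℝ) {R α : ℝ} (hR : 0 < R) (hα : 0 < α) :
    Tendsto (fun ρ : ℝ => D / ((R - ρ) ^ α - (2 * ρ) ^ α)) (𝓝 0) (𝓝 (D / R ^ α)) := by
  have hcont : ContinuousAt (fun ρ : ℝ => (R - ρ) ^ α - (2 * ρ) ^ α) 0 := by
    fun_prop (disch := first | exact Or.inr hα.le | simp [hR.ne'])
  have hval : (R - 0) ^ α - (2 * 0 : ℝ) ^ α = R ^ α := by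
    simp [Real.zero_rpow hα.ne']
  have hquot := (continuousAt_const (y := D)).div hcont (by rw [hval]; positivity)
  have hlim := hquot.tendsto
  rwa [Pi.div_apply, hval] at hlim

variable {n : ℕ} {p : ℝ} {X : Set (EucSp n)} {u : EucSp n → EReal}
  {x y z x₀ : EucSp n} {s t R : ℝ}

theorem le_ballSup (h : z ∈ closedBall y t) : u z ≤ ballSup u y t :=
  le_sSup (mem_image_of_mem u h)

theorem ballSup_zero (y : EucSp n) : ballSup u y 0 = u y := by
  rw [ballSup, closedBall_zero, image_singleton, sSup_singleton]

theorem ballSup_mono (h : closedBall y s ⊆ closedBall z t) : ballSup u y s ≤ ballSup u z t :=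
  sSup_le_sSup (image_mono h)

theorem exists_ballSup_eq (ht : 0 ≤ t) (hu : UpperSemicontinuousOn u (closedBall y t)) :
    ∃ a ∈ closedBall y t, ballSup u y t = u a := by
  obtain ⟨a, ha, hmax⟩ := hu.exists_isMaxOn (nonempty_closedBall.2 ht) (isCompact_closedBall y t)
  exact ⟨a, ha, le_antisymm (sSup_le (forall_mem_image.2 hmax)) (le_ballSup ha)⟩

section Holder

variable {α B : ℝ} {K K' : Set (EucSp n)}

def holderQuotients (α : ℝ) (u : EucSp n → EReal) (K : Set (EucSp n)) : Set ℝ :=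
  {c : ℝ | ∃ x ∈ K, ∃ y ∈ K, x ≠ y ∧ c = |(u x).toReal - (u y).toReal| / dist x y ^ α}

theorem holderSemi_nonneg : 0 ≤ holderSemi α u K := by
  refine Real.sSup_nonneg ?_
  rintro c ⟨x, -, y, -, -, rfl⟩
  positivity

theorem holderSemi_mono (hK : K ⊆ K') (hbdd : BddAbove (holderQuotients α u K')) :
    holderSemi α u K ≤ holderSemi α u K' := by
  refine Real.sSup_le ?_ holderSemi_nonneg
  rintro c ⟨x, hx, y, hy, hxy, rfl⟩
  exact le_csSup hbdd ⟨x, hK hx, y, hK hy, hxy, rfl⟩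

theorem le_holderSemi (hbdd : BddAbove (holderQuotients α u K)) (hx : x ∈ K) (hy : y ∈ K)
    (hxy : x ≠ y) : |(u x).toReal - (u y).toReal| / dist x y ^ α ≤ holderSemi α u K :=
  le_csSup hbdd ⟨x, hx, y, hy, hxy, rfl⟩

theorem forall_holderQuotients_le
    (h : ∀ x ∈ K, ∀ y ∈ K, x ≠ y → |(u x).toReal - (u y).toReal| ≤ B * dist x y ^ α) :
    ∀ c ∈ holderQuotients α u K, c ≤ B := by
  rintro c ⟨x, hx, y, hy, hxy, rfl⟩
  exact (div_le_iff₀ (Real.rpow_pos_of_pos (dist_pos.2 hxy) α)).2 (h x hx y hy hxy)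

end Holder

namespace HypB

theorem ne_top (hB : HypB p X u) (hx : x ∈ X) : u x ≠ ⊤ := (hB.2.2.1 x hx).ne

theorem exists_ballSup_eq (hB : HypB p X u) (ht : 0 ≤ t) (hsub : closedBall y t ⊆ X) :
    ∃ a ∈ closedBall y t, ballSup u y t = u a :=
  _root_.exists_ballSup_eq ht (hB.2.1.mono hsub)

theorem ballSup_ne_top (hB : HypB p X u) (ht : 0 ≤ t) (hsub : closedBall y t ⊆ X) :
    ballSup u y t ≠ ⊤ := by
  obtain ⟨a, ha, heq⟩ := hB.exists_ballSup_eq ht hsub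
  exact heq ▸ hB.ne_top (hsub ha)

/-- If `u x = ⊥`, double monotonicity at `s = 0` would bound `⊤` by a real number. -/
theorem ne_bot (hB : HypB p X u) (hp2 : p < 2) (hx : x ∈ X) : u x ≠ ⊥ := by
  intro hbot
  obtain ⟨r, hr, hsub⟩ := nhds_basis_closedBall.mem_iff.1 (hB.1.mem_nhds hx)
  have hsub' : closedBall x (r / 2) ⊆ X := (closedBall_subset_closedBall (by linarith)).trans hsub
  have hm := hB.2.2.2.2.2 x hx 0 (r / 2) (r / 2) r le_rfl (by linarith) (by linarith) (by linarith)
    (by linarith) hsub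
  obtain ⟨z, hz, hzbot⟩ := hB.2.2.2.1 x (r / 2) (by linarith) hsub'
  have hhalf_ne_bot : ballSup u x (r / 2) ≠ ⊥ := fun h => hzbot (le_bot_iff.1 (h ▸ le_ballSup hz))
  have hfull_ne_bot : ballSup u x r ≠ ⊥ :=
    ne_bot_of_le_ne_bot hhalf_ne_bot (ballSup_mono (closedBall_subset_closedBall (by linarith)))
  have hpos : (0 : ℝ) < r ^ (2 - p) - (r / 2) ^ (2 - p) :=
    sub_pos.2 (Real.rpow_lt_rpow (by linarith) (by linarith) (by linarith))
  rw [ballSup_zero, hbot, EReal.sub_bot hhalf_ne_bot, EReal.top_mul_coe_of_pos hpos,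
    ← EReal.coe_toReal (hB.ballSup_ne_top hr.le hsub) hfull_ne_bot,
    ← EReal.coe_toReal (hB.ballSup_ne_top (by linarith) hsub') hhalf_ne_bot] at hm
  exact EReal.coe_ne_top _ (top_le_iff.1 (by exact_mod_cast hm))

theorem ballSup_ne_bot (hB : HypB p X u) (hp2 : p < 2) (ht : 0 ≤ t)
    (hsub : closedBall y t ⊆ X) : ballSup u y t ≠ ⊥ := by
  obtain ⟨a, ha, heq⟩ := hB.exists_ballSup_eq ht hsub
  exact heq ▸ hB.ne_bot hp2 (hsub ha)

theorem coe_toReal_ballSup (hB : HypB p X u) (hp2 : p < 2) (ht : 0 ≤ t)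
    (hsub : closedBall y t ⊆ X) : ((ballSup u y t).toReal : EReal) = ballSup u y t :=
  EReal.coe_toReal (hB.ballSup_ne_top ht hsub) (hB.ballSup_ne_bot hp2 ht hsub)

theorem toReal_le_toReal_ballSup (hB : HypB p X u) (hp2 : p < 2) (hsub : closedBall y t ⊆ X)
    (hz : z ∈ closedBall y t) : (u z).toReal ≤ (ballSup u y t).toReal :=
  EReal.toReal_le_toReal (le_ballSup hz) (hB.ne_bot hp2 (hsub hz))
    (hB.ballSup_ne_top (dist_nonneg.trans hz) hsub)

theorem toReal_ballSup_mono (hB : HypB p X u) (hp2 : p < 2) (hs : 0 ≤ s)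
    (h : closedBall y s ⊆ closedBall z t) (hsub : closedBall z t ⊆ X) :
    (ballSup u y s).toReal ≤ (ballSup u z t).toReal :=
  EReal.toReal_le_toReal (ballSup_mono h) (hB.ballSup_ne_bot hp2 hs (h.trans hsub))
    (hB.ballSup_ne_top (dist_nonneg.trans (h (mem_closedBall_self hs))) hsub)

theorem toReal_double_mono (hB : HypB p X u) (hp2 : p < 2) {s t s' t' : ℝ} (hs : 0 ≤ s)
    (hst : s < t) (hss' : s ≤ s') (htt' : t ≤ t') (hs't' : s' < t')
    (hsub : closedBall y t' ⊆ X) :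
    ((ballSup u y t).toReal - (ballSup u y s).toReal) * (t' ^ (2 - p) - s' ^ (2 - p)) ≤
      ((ballSup u y t').toReal - (ballSup u y s').toReal) * (t ^ (2 - p) - s ^ (2 - p)) := by
  have hm := hB.2.2.2.2.2 y (hsub (mem_closedBall_self (by linarith))) s t s' t' hs hst hss'
    htt' hs't' hsub
  have hcoe : ∀ r, 0 ≤ r → r ≤ t' → ((ballSup u y r).toReal : EReal) = ballSup u y r :=
    fun r h0 hr => hB.coe_toReal_ballSup hp2 h0 ((closedBall_subset_closedBall hr).trans hsub)
  rw [← hcoe t (by linarith) htt', ← hcoe s hs (by linarith), ← hcoe t' (by linarith) le_rfl,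
    ← hcoe s' (by linarith) hs't'.le] at hm
  exact_mod_cast hm

theorem toReal_sub_mul_le (hB : HypB p X u) (hp2 : p < 2) {d s' t' : ℝ} (hd : 0 < d)
    (hxy : dist x y ≤ d) (hds' : d ≤ s') (hs't' : s' < t') (hsub : closedBall y t' ⊆ X) :
    ((u x).toReal - (u y).toReal) * (t' ^ (2 - p) - s' ^ (2 - p)) ≤
      ((ballSup u y t').toReal - (ballSup u y s').toReal) * d ^ (2 - p) := by
  have hm := hB.toReal_double_mono hp2 le_rfl hd (by linarith) (by linarith) hs't' hsub
  rw [ballSup_zero, Real.zero_rpow (by linarith), sub_zero] at hm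
  refine le_trans ?_ hm
  have hux := hB.toReal_le_toReal_ballSup hp2
    ((closedBall_subset_closedBall (by linarith)).trans hsub) (mem_closedBall.2 hxy)
  have hcoef : 0 ≤ t' ^ (2 - p) - s' ^ (2 - p) :=
    sub_nonneg.2 (Real.rpow_le_rpow (by linarith) hs't'.le (by linarith))
  exact mul_le_mul_of_nonneg_right (by linarith) hcoef

theorem toReal_sub_mul_le_of_mem_closedBall (hB : HypB p X u) (hp2 : p < 2) {ρ : ℝ}
    (hρR : 3 * ρ < R) (hsub : closedBall x₀ R ⊆ X) (hx : x ∈ closedBall x₀ ρ)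
    (hy : y ∈ closedBall x₀ ρ) (hxy : x ≠ y) :
    ((u x).toReal - (u y).toReal) * ((R - ρ) ^ (2 - p) - (2 * ρ) ^ (2 - p)) ≤
      ((ballSup u x₀ R).toReal - (u x₀).toReal) * dist x y ^ (2 - p) := by
  rw [mem_closedBall] at hx hy
  have hρ : 0 ≤ ρ := dist_nonneg.trans hy
  have hd : dist x y ≤ 2 * ρ := by
    linarith [dist_triangle_right x y x₀]
  have hsub_y : closedBall y (R - ρ) ⊆ closedBall x₀ R :=
    closedBall_subset_closedBall' (by linarith)
  have hM := hB.toReal_ballSup_mono hp2 (by linarith) hsub_y hsub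
  have hm := hB.toReal_le_toReal_ballSup hp2 (y := y) (t := 2 * ρ) (z := x₀)
    ((closedBall_subset_closedBall (by linarith)).trans (hsub_y.trans hsub))
    (by rw [mem_closedBall, dist_comm]; linarith)
  refine (hB.toReal_sub_mul_le hp2 (dist_pos.2 hxy) le_rfl hd (by linarith)
    (hsub_y.trans hsub)).trans ?_
  exact mul_le_mul_of_nonneg_right (by linarith) (by positivity)

theorem holderSemi_closedBall_le (hB : HypB p X u) (hp2 : p < 2) {ρ : ℝ} (hρ : 0 ≤ ρ)
    (hρR : 3 * ρ < R) (hsub : closedBall x₀ R ⊆ X) :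
    holderSemi (2 - p) u (closedBall x₀ ρ) ≤
      ((ballSup u x₀ R).toReal - (u x₀).toReal) / ((R - ρ) ^ (2 - p) - (2 * ρ) ^ (2 - p)) := by
  have hc : 0 < (R - ρ) ^ (2 - p) - (2 * ρ) ^ (2 - p) :=
    sub_pos.2 (Real.rpow_lt_rpow (by linarith) (by linarith) (by linarith))
  have hD := hB.toReal_le_toReal_ballSup hp2 hsub (mem_closedBall_self (by linarith))
  refine Real.sSup_le (forall_holderQuotients_le fun x hx y hy hxy => ?_)
    (div_nonneg (by linarith) hc.le)
  rw [div_mul_eq_mul_div, le_div_iff₀ hc]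
  rcases le_total (u y).toReal (u x).toReal with hle | hle
  · rw [abs_of_nonneg (sub_nonneg.2 hle)]
    exact hB.toReal_sub_mul_le_of_mem_closedBall hp2 hρR hsub hx hy hxy
  · rw [abs_sub_comm, abs_of_nonneg (sub_nonneg.2 hle), dist_comm]
    exact hB.toReal_sub_mul_le_of_mem_closedBall hp2 hρR hsub hy hx hxy.symm

theorem toReal_sub_mul_le_of_dist_le_half (hB : HypB p X u) (hp2 : p < 2) {ε : ℝ} (hε : 0 < ε)
    (hsub : closedBall x₀ (R + ε) ⊆ X) (hy : y ∈ closedBall x₀ R) (hz : dist z y ≤ ε / 2) :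
    ((u z).toReal - (u y).toReal) * (ε ^ (2 - p) - (ε / 2) ^ (2 - p)) ≤
      ((ballSup u x₀ (R + ε)).toReal - (u y).toReal) * dist z y ^ (2 - p) := by
  have hsub_y : closedBall y ε ⊆ closedBall x₀ (R + ε) :=
    closedBall_subset_closedBall' (by rw [mem_closedBall] at hy; linarith)
  rcases eq_or_ne z y with rfl | hzy
  · simp [Real.zero_rpow (by linarith : (2 : ℝ) - p ≠ 0)]
  refine (hB.toReal_sub_mul_le hp2 (dist_pos.2 hzy) le_rfl hz (by linarith)
    (hsub_y.trans hsub)).trans ?_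
  have hM := hB.toReal_ballSup_mono hp2 hε.le hsub_y hsub
  have hm := hB.toReal_le_toReal_ballSup hp2 (t := ε / 2) (z := y)
    ((closedBall_subset_closedBall (by linarith)).trans (hsub_y.trans hsub))
    (mem_closedBall_self (by linarith))
  exact mul_le_mul_of_nonneg_right (by linarith) (by positivity)

/-- The increment estimate centred at a point `z` near `y` gives
`u z ≥ 2 u y - M(u, x₀, R + ε)`; compactness makes this local lower bound global. -/
theorem bddBelow_toReal_image_closedBall (hB : HypB p X u) (hp2 : p < 2) {ε : ℝ} (hε : 0 < ε)
    (hsub : closedBall x₀ (R + ε) ⊆ X) :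
    BddBelow ((fun z => (u z).toReal) '' closedBall x₀ R) := by
  set C := (ballSup u x₀ (R + ε)).toReal
  set c := ε ^ (2 - p) - (ε / 2) ^ (2 - p)
  have hc : 0 < c := sub_pos.2 (Real.rpow_lt_rpow (by linarith) (by linarith) (by linarith))
  refine (isCompact_closedBall x₀ R).bddBelow_image_of_forall_nhdsWithin fun y hy => ?_
  have hlim : Tendsto (fun z : EucSp n => dist z y ^ (2 - p)) (𝓝 y) (𝓝 0) := by
    have := ((continuous_id.dist (continuous_const (y := y))).rpow_const
      (fun _ => Or.inr (by linarith : (0 : ℝ) ≤ 2 - p))).tendsto y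
    simpa [Real.zero_rpow (by linarith : (2 : ℝ) - p ≠ 0)] using this
  refine ⟨closedBall x₀ R ∩ {z | dist z y ^ (2 - p) < c / 2 ∧ dist z y ≤ ε / 2},
    inter_mem_nhdsWithin _ ((hlim.eventually (gt_mem_nhds (half_pos hc))).and
      (closedBall_mem_nhds y (half_pos hε))), 2 * (u y).toReal - C, ?_⟩
  rintro _ ⟨z, ⟨hz, hzc, hzε⟩, rfl⟩
  have hstep := hB.toReal_sub_mul_le_of_dist_le_half hp2 hε hsub hz (by rwa [dist_comm])
  have hCz := hB.toReal_le_toReal_ballSup hp2 hsub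
    (closedBall_subset_closedBall (by linarith) hz)
  have hmul : ((u y).toReal - (u z).toReal) * c ≤ ((C - (u z).toReal) / 2) * c :=
    calc _ ≤ (C - (u z).toReal) * dist y z ^ (2 - p) := hstep
      _ ≤ (C - (u z).toReal) * (c / 2) :=
        mul_le_mul_of_nonneg_left (by rw [dist_comm]; exact hzc.le) (by linarith)
      _ = _ := by ring
  have := le_of_mul_le_mul_right hmul hc
  show 2 * (u y).toReal - C ≤ (u z).toReal
  linarith

theorem bddAbove_holderQuotients (hB : HypB p X u) (hp2 : p < 2) (hR : 0 ≤ R)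
    (hsub : closedBall x₀ R ⊆ X) : BddAbove (holderQuotients (2 - p) u (closedBall x₀ R)) := by
  obtain ⟨ε, hε, hsubε⟩ := exists_pos_closedBall_add_subset hB.1 hR hsub
  obtain ⟨m, hm⟩ := hB.bddBelow_toReal_image_closedBall hp2 hε hsubε
  set C := (ballSup u x₀ (R + ε)).toReal
  set c := ε ^ (2 - p) - (ε / 2) ^ (2 - p)
  have hc : 0 < c := sub_pos.2 (Real.rpow_lt_rpow (by linarith) (by linarith) (by linarith))
  have hbounds : ∀ z ∈ closedBall x₀ R, m ≤ (u z).toReal ∧ (u z).toReal ≤ C := fun z hz =>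
    ⟨hm (mem_image_of_mem _ hz), hB.toReal_le_toReal_ballSup hp2 hsubε
      (closedBall_subset_closedBall (by linarith) hz)⟩
  have hnear : ∀ a ∈ closedBall x₀ R, ∀ b, dist b a ≤ ε / 2 →
      (u b).toReal - (u a).toReal ≤ (C - m) / c * dist b a ^ (2 - p) := by
    intro a ha b hb
    rw [div_mul_eq_mul_div, le_div_iff₀ hc]
    exact (hB.toReal_sub_mul_le_of_dist_le_half hp2 hε hsubε ha hb).trans
      (mul_le_mul_of_nonneg_right (by linarith [(hbounds a ha).1]) (by positivity))
  refine ⟨max ((C - m) / c) ((C - m) / (ε / 2) ^ (2 - p)),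
    forall_holderQuotients_le fun x hx y hy hxy => ?_⟩
  obtain ⟨hmx, hxC⟩ := hbounds x hx
  obtain ⟨hmy, hyC⟩ := hbounds y hy
  have hdα : 0 < dist x y ^ (2 - p) := Real.rpow_pos_of_pos (dist_pos.2 hxy) _
  rcases le_or_gt (dist x y) (ε / 2) with hclose | hfar
  · refine le_trans ?_ (mul_le_mul_of_nonneg_right (le_max_left _ _) hdα.le)
    rw [abs_sub_le_iff]
    refine ⟨hnear y hy x hclose, ?_⟩
    rw [dist_comm]
    exact hnear x hx y (by rwa [dist_comm])
  · have hεα : 0 < (ε / 2) ^ (2 - p) := by positivity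
    calc |(u x).toReal - (u y).toReal| ≤ C - m := by
          rw [abs_sub_le_iff]; constructor <;> linarith
      _ = (C - m) / (ε / 2) ^ (2 - p) * (ε / 2) ^ (2 - p) := (div_mul_cancel₀ _ hεα.ne').symm
      _ ≤ (C - m) / (ε / 2) ^ (2 - p) * dist x y ^ (2 - p) :=
          mul_le_mul_of_nonneg_left (Real.rpow_le_rpow (by positivity) hfar.le (by linarith))
            (div_nonneg (by linarith) hεα.le)
      _ ≤ _ := mul_le_mul_of_nonneg_right (le_max_right _ _) hdα.le

theorem ballSup_sub_div_le_holderSemi (hB : HypB p X u) (hp2 : p < 2) (ht : 0 < t)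
    (hsub : closedBall x₀ t ⊆ X) :
    ((ballSup u x₀ t).toReal - (u x₀).toReal) / t ^ (2 - p) ≤
      holderSemi (2 - p) u (closedBall x₀ t) := by
  obtain ⟨a, ha, hmax⟩ := hB.exists_ballSup_eq ht.le hsub
  rw [hmax]
  rcases eq_or_ne a x₀ with rfl | hne
  · simpa using holderSemi_nonneg
  calc ((u a).toReal - (u x₀).toReal) / t ^ (2 - p)
      ≤ |(u a).toReal - (u x₀).toReal| / dist a x₀ ^ (2 - p) :=
        div_le_div₀ (abs_nonneg _) (le_abs_self _) (Real.rpow_pos_of_pos (dist_pos.2 hne) _)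
          (Real.rpow_le_rpow dist_nonneg ha (by linarith))
    _ ≤ _ := le_holderSemi (hB.bddAbove_holderQuotients hp2 ht.le hsub) ha
        (mem_closedBall_self ht.le) hne

theorem exists_tendsto_holderSemi (hB : HypB p X u) (hp2 : p < 2) {r : ℝ} (hr : 0 < r)
    (hsub : closedBall x₀ r ⊆ X) :
    ∃ H, Tendsto (fun ρ => holderSemi (2 - p) u (closedBall x₀ ρ)) (𝓝[>] 0) (𝓝 H) := by
  refine ⟨_, MonotoneOn.tendsto_nhdsWithin_Ioo_right (nonempty_Ioo.2 hr) ?_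
    ⟨0, forall_mem_image.2 fun _ _ => holderSemi_nonneg⟩⟩
  intro s _ t ht hst
  exact holderSemi_mono (closedBall_subset_closedBall hst) (hB.bddAbove_holderQuotients hp2
    ht.1.le ((closedBall_subset_closedBall ht.2.le).trans hsub))

theorem le_ballSup_sub_div_of_tendsto (hB : HypB p X u) (hp2 : p < 2) {H : ℝ}
    (hH : Tendsto (fun ρ => holderSemi (2 - p) u (closedBall x₀ ρ)) (𝓝[>] 0) (𝓝 H))
    (hR : 0 < R) (hsub : closedBall x₀ R ⊆ X) :
    H ≤ ((ballSup u x₀ R).toReal - (u x₀).toReal) / R ^ (2 - p) := by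
  refine le_of_tendsto_of_tendsto hH
    ((tendsto_div_rpow_sub_rpow _ hR (by linarith)).mono_left nhdsWithin_le_nhds) ?_
  filter_upwards [Ioo_mem_nhdsGT (by linarith : (0 : ℝ) < R / 3)] with ρ hρ
  exact hB.holderSemi_closedBall_le hp2 hρ.1.le (by linarith [hρ.2]) hsub

end HypB

theorem stmt16_general (n : ℕ) (p : ℝ) (hp2 : p < 2)
    (X : Set (EucSp n)) (u : EucSp n → EReal) (hB : HypB p X u)
    (x₀ : EucSp n) (hx₀ : x₀ ∈ X) :
    ∃ H : ℝ,
      Tendsto (fun ρ : ℝ => holderSemi (2 - p) u (Metric.closedBall x₀ ρ))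
        (𝓝[>] 0) (𝓝 H) ∧
      (∀ R : ℝ, 0 < R → Metric.closedBall x₀ R ⊆ X →
        H ≤ ((ballSup u x₀ R).toReal - (u x₀).toReal) / R ^ (2 - p) ∧
        ((ballSup u x₀ R).toReal - (u x₀).toReal) / R ^ (2 - p) ≤
          holderSemi (2 - p) u (Metric.closedBall x₀ R)) ∧
      Tendsto (fun t : ℝ => ((ballSup u x₀ t).toReal - (u x₀).toReal) / t ^ (2 - p))
        (𝓝[>] 0) (𝓝 H) := by
  obtain ⟨r, hr, hsub⟩ := nhds_basis_closedBall.mem_iff.1 (hB.1.mem_nhds hx₀)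
  obtain ⟨H, hH⟩ := hB.exists_tendsto_holderSemi hp2 hr hsub
  have hsub_of_lt : ∀ t ∈ Ioo 0 r, closedBall x₀ t ⊆ X := fun t ht =>
    (closedBall_subset_closedBall ht.2.le).trans hsub
  refine ⟨H, hH, fun R hR hsubR => ⟨hB.le_ballSup_sub_div_of_tendsto hp2 hH hR hsubR,
    hB.ballSup_sub_div_le_holderSemi hp2 hR hsubR⟩, ?_⟩
  refine tendsto_of_tendsto_of_tendsto_of_le_of_le' tendsto_const_nhds hH ?_ ?_ <;>
    filter_upwards [Ioo_mem_nhdsGT hr] with t ht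
  · exact hB.le_ballSup_sub_div_of_tendsto hp2 hH ht.1 (hsub_of_lt t ht)
  · exact hB.ballSup_sub_div_le_holderSemi hp2 ht.1 (hsub_of_lt t ht)

/-- Under Hypothesis B, the infinitesimal Hölder norm
`‖u‖_α(x₀) = lim_{ρ↓0} ‖u‖_α(B_ρ(x₀))` exists, is squeezed between the density
quotients, and equals the density `Θ^M(u, x₀)`. -/
theorem stmt16 (n : ℕ) (p : ℝ) (hp1 : 1 ≤ p) (hp2 : p < 2)
    (X : Set (EucSp n)) (u : EucSp n → EReal) (hB : HypB p X u)
    (x₀ : EucSp n) (hx₀ : x₀ ∈ X) :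
    ∃ H : ℝ,
      Tendsto (fun ρ : ℝ => holderSemi (2 - p) u (Metric.closedBall x₀ ρ))
        (𝓝[>] 0) (𝓝 H) ∧
      (∀ R : ℝ, 0 < R → Metric.closedBall x₀ R ⊆ X →
        H ≤ ((ballSup u x₀ R).toReal - (u x₀).toReal) / R ^ (2 - p) ∧
        ((ballSup u x₀ R).toReal - (u x₀).toReal) / R ^ (2 - p) ≤
          holderSemi (2 - p) u (Metric.closedBall x₀ R)) ∧
      Tendsto (fun t : ℝ => ((ballSup u x₀ t).toReal - (u x₀).toReal) / t ^ (2 - p))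
        (𝓝[>] 0) (𝓝 H) :=
  stmt16_general n p hp2 X u hB x₀ hx₀
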